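/- arXiv:2208.08223 — 3 statements merged into one kernel-verified Lean document; each statement's English description precedes it below -/
import Mathlib

section
/- For the Euclidean lattice harmonic oscillator, the expectation ⟨Φ²⟩_E := (∫_{ℝ^τ} e^{−⟨Φ,ΣΦ⟩} (1/τ)Σ_{k} Φ_k² dΦ) / (∫_{ℝ^τ} e^{−⟨Φ,ΣΦ⟩} dΦ) equals (1/(2τ)) Σ_{k=0}^{τ−1} λ_k², where λ_k² = ( a m ω²/(2ħ) + (m/(aħ))(1 − cos(2πk/τ)) )^{−1}. -/
/-!
Write `Σ = U D Uᵀ` with `U` orthogonal and `D = diag(μ₁, …, μ_τ)`. The substitution `Φ = U y`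
preserves Lebesgue measure and `|Φ|²`, and turns `⟨Φ, ΣΦ⟩` into `∑ μ_j y_j²`, so both integrals
factor into one-dimensional Gaussian integrals and the ratio is `∑ 1 / (2 μ_j)`. The eigenvalues
`μ_j` are identified through the characteristic polynomial: `Σ` is circulant, so over `ℂ` the
Vandermonde matrix of the `τ`-th roots of unity diagonalizes it, with eigenvalues
`λ_k⁻² = a m ω² / (2ħ) + (m / (a ħ)) (1 - cos (2πk/τ))`.
-/

open MeasureTheory Real Matrix Polynomial

theorem integral_sq_mul_exp_neg_mul_sq {b : ℝ} (hb : 0 < b) :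
    ∫ x : ℝ, x ^ 2 * exp (-(b * x ^ 2)) = √(π / b) / (2 * b) := by
  have hsymm : ∫ x : ℝ, x ^ 2 * exp (-(b * x ^ 2))
      = 2 * ∫ x in Set.Ioi 0, x ^ 2 * exp (-(b * x ^ 2)) := by
    rw [← integral_comp_abs (f := fun x => x ^ 2 * exp (-(b * x ^ 2)))]
    simp only [sq_abs]
  have hGamma : ∫ x in Set.Ioi 0, x ^ 2 * exp (-(b * x ^ 2))
      = b ^ (-(3 / 2 : ℝ)) * (1 / 2) * Gamma (3 / 2) := by
    have h := integral_rpow_mul_exp_neg_mul_rpow (p := 2) (q := 2) two_pos (by norm_num) hb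
    norm_num at h
    rw [← h]
  have hGamma32 : Gamma (3 / 2) = √π / 2 := by
    rw [show (3 : ℝ) / 2 = 1 / 2 + 1 by norm_num, Gamma_add_one (by norm_num), Gamma_one_half_eq]
    ring
  have hpow : b ^ (-(3 / 2 : ℝ)) = (b * √b)⁻¹ := by
    rw [rpow_neg hb.le, show (3 / 2 : ℝ) = 1 + 1 / 2 by norm_num, rpow_add hb, rpow_one,
      ← sqrt_eq_rpow]
  have hsqrt : √b ≠ 0 := (sqrt_pos.mpr hb).ne'
  rw [hsymm, hGamma, hGamma32, hpow, sqrt_div' π hb.le]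
  field_simp

theorem integrable_sq_mul_exp_neg_mul_sq {b : ℝ} (hb : 0 < b) :
    Integrable fun x : ℝ => x ^ 2 * exp (-(b * x ^ 2)) := by
  have h := integrable_rpow_mul_exp_neg_mul_sq hb (s := 2) (by norm_num)
  simpa only [neg_mul, rpow_two] using h

section Gaussian

variable {ι : Type*} [Fintype ι]

theorem integral_exp_neg_sum_mul_sq (μ : ι → ℝ) :
    ∫ y : ι → ℝ, exp (-∑ i, μ i * y i ^ 2) = ∏ i, √(π / μ i) := by
  simp_rw [← Finset.sum_neg_distrib, exp_sum]
  rw [integral_fintype_prod_volume_eq_prod (f := fun i x => exp (-(μ i * x ^ 2)))]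
  simp_rw [← neg_mul, integral_gaussian]

theorem integral_exp_neg_sum_mul_sq_mul_sum_sq [DecidableEq ι] {μ : ι → ℝ} (hμ : ∀ i, 0 < μ i) :
    ∫ y : ι → ℝ, exp (-∑ i, μ i * y i ^ 2) * ∑ i, y i ^ 2
      = (∑ i, (2 * μ i)⁻¹) * ∏ i, √(π / μ i) := by
  -- the `j`-th summand factors over the coordinates, with `x ^ 2` inserted in coordinate `j`
  let g (j i : ι) (x : ℝ) : ℝ := (if i = j then x ^ 2 else 1) * exp (-(μ i * x ^ 2))
  have hfactor (y : ι → ℝ) :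
      exp (-∑ i, μ i * y i ^ 2) * ∑ j, y j ^ 2 = ∑ j, ∏ i, g j i (y i) := by
    rw [Finset.mul_sum]
    refine Finset.sum_congr rfl fun j _ => ?_
    simp only [g, Finset.prod_mul_distrib, Finset.prod_ite_eq', Finset.mem_univ, if_true,
      ← exp_sum, Finset.sum_neg_distrib, mul_comm]
  have hg (j i : ι) : ∫ x, g j i x = (if i = j then (2 * μ j)⁻¹ else 1) * √(π / μ i) := by
    by_cases h : i = j
    · subst h; simp [g, integral_sq_mul_exp_neg_mul_sq (hμ i), div_eq_inv_mul]
    · simp [g, h, ← neg_mul, integral_gaussian]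
  have hint (j i : ι) : Integrable (g j i) := by
    by_cases h : i = j
    · simpa [g, h] using integrable_sq_mul_exp_neg_mul_sq (hμ i)
    · simpa [g, h, ← neg_mul] using integrable_exp_neg_mul_sq (hμ i)
  simp_rw [hfactor]
  rw [integral_finsetSum (μ := volume) _ fun j _ => Integrable.fintype_prod (hint j),
    Finset.sum_mul]
  refine Finset.sum_congr rfl fun j _ => ?_
  rw [integral_fintype_prod_volume_eq_prod (g j)]
  simp_rw [hg, Finset.prod_mul_distrib, Finset.prod_ite_eq']
  simp

theorem integral_exp_neg_sum_mul_sq_mul_sum_sq_div [DecidableEq ι] {μ : ι → ℝ}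
    (hμ : ∀ i, 0 < μ i) :
    (∫ y : ι → ℝ, exp (-∑ i, μ i * y i ^ 2) * ∑ i, y i ^ 2) /
        ∫ y : ι → ℝ, exp (-∑ i, μ i * y i ^ 2) = ∑ i, (2 * μ i)⁻¹ := by
  have hpos : 0 < ∏ i, √(π / μ i) :=
    Finset.prod_pos fun i _ => sqrt_pos.mpr (div_pos pi_pos (hμ i))
  rw [integral_exp_neg_sum_mul_sq_mul_sum_sq hμ, integral_exp_neg_sum_mul_sq,
    mul_div_cancel_right₀ _ hpos.ne']

theorem Matrix.mulVec_dotProduct_mulVec_mulVec {m n R : Type*} [Fintype m] [Fintype n]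
    [CommSemiring R] (U : Matrix m n R) (M : Matrix m m R) (x : n → R) :
    U *ᵥ x ⬝ᵥ M *ᵥ (U *ᵥ x) = x ⬝ᵥ (Uᵀ * M * U) *ᵥ x := by
  conv_rhs => rw [← mulVec_mulVec, ← mulVec_mulVec, dotProduct_mulVec, vecMul_transpose]

theorem integral_comp_unitaryGroup_mulVec [DecidableEq ι] {E : Type*} [NormedAddCommGroup E]
    [NormedSpace ℝ E] (U : unitaryGroup ι ℝ) (g : (ι → ℝ) → E) :
    ∫ x, g ((U : Matrix ι ι ℝ) *ᵥ x) = ∫ x, g x := by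
  have hdet : |(U : Matrix ι ι ℝ).det| = 1 := by
    have h := Unitary.star_mul_self_of_mem (det_of_mem_unitary U.2)
    rw [star_trivial, ← sq, ← sq_abs] at h
    exact (pow_eq_one_iff_of_nonneg (abs_nonneg _) two_ne_zero).mp h
  let e := UnitaryGroup.toLinearEquiv U
  have he : MeasurePreserving e := by
    refine ⟨e.toLinearMap.continuous_of_finiteDimensional.measurable, ?_⟩
    have he_eq : ⇑e = toLin' (U : Matrix ι ι ℝ) := rfl
    rw [he_eq, Real.map_matrix_volume_pi_eq_smul_volume_pi (by simp [← abs_pos, hdet]), abs_inv,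
      hdet]
    simp
  exact he.integral_comp e.toContinuousLinearEquiv.toHomeomorph.measurableEmbedding g

theorem Matrix.IsHermitian.integral_exp_neg_dotProduct_mulVec_mul_sum_sq_div [DecidableEq ι]
    {A : Matrix ι ι ℝ} (hA : A.IsHermitian) (hpos : ∀ i, 0 < hA.eigenvalues i) :
    (∫ x : ι → ℝ, Real.exp (-(x ⬝ᵥ A *ᵥ x)) * ∑ i, x i ^ 2) /
        ∫ x : ι → ℝ, Real.exp (-(x ⬝ᵥ A *ᵥ x)) = ∑ i, (2 * hA.eigenvalues i)⁻¹ := by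
  set U := hA.eigenvectorUnitary
  have hUT : (U : Matrix ι ι ℝ)ᵀ = star (U : Matrix ι ι ℝ) :=
    (conjTranspose_eq_transpose_of_trivial _).symm
  have hdiag : (U : Matrix ι ι ℝ)ᵀ * A * U = diagonal hA.eigenvalues := by
    simpa [hUT] using hA.conjStarAlgAut_star_eigenvectorUnitary
  have hquad (y : ι → ℝ) :
      (U : Matrix ι ι ℝ) *ᵥ y ⬝ᵥ A *ᵥ (U *ᵥ y) = ∑ i, hA.eigenvalues i * y i ^ 2 := by
    rw [mulVec_dotProduct_mulVec_mulVec, hdiag]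
    simp [dotProduct, mulVec_diagonal, sq, mul_left_comm]
  have hnorm (y : ι → ℝ) : ∑ i, ((U : Matrix ι ι ℝ) *ᵥ y) i ^ 2 = ∑ i, y i ^ 2 := by
    have h := mulVec_dotProduct_mulVec_mulVec (U : Matrix ι ι ℝ) 1 y
    rw [Matrix.mul_one, hUT, mem_unitaryGroup_iff'.mp U.2, one_mulVec, one_mulVec] at h
    simpa [dotProduct, sq] using h
  rw [← integral_comp_unitaryGroup_mulVec U,
    ← integral_comp_unitaryGroup_mulVec U (fun x => Real.exp (-(x ⬝ᵥ A *ᵥ x)))]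
  simp only [hquad, hnorm]
  exact integral_exp_neg_sum_mul_sq_mul_sum_sq_div hpos

end Gaussian

section RootsOfUnity

variable {R : Type*} {τ : ℕ}

theorem pow_val_add_of_pow_eq_one [Monoid R] {ζ : R} (hζ : ζ ^ τ = 1) (a b : Fin τ) :
    ζ ^ ((a + b : Fin τ) : ℕ) = ζ ^ (a : ℕ) * ζ ^ (b : ℕ) := by
  rw [Fin.val_add, ← pow_eq_pow_mod _ hζ, pow_add]

theorem pow_val_neg_of_pow_eq_one [DivisionRing R] [NeZero τ] {ζ : R} (hζ : ζ ^ τ = 1)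
    (a : Fin τ) : ζ ^ ((-a : Fin τ) : ℕ) = (ζ ^ (a : ℕ))⁻¹ := by
  refine eq_inv_of_mul_eq_one_left ?_
  rw [← pow_val_add_of_pow_eq_one hζ, neg_add_cancel, Fin.val_zero, pow_zero]

theorem pow_val_one_of_pow_eq_one [Monoid R] [NeZero τ] {ζ : R} (hζ : ζ ^ τ = 1) :
    ζ ^ ((1 : Fin τ) : ℕ) = ζ := by
  rw [Fin.val_one', ← pow_eq_pow_mod _ hζ, pow_one]

end RootsOfUnity

theorem Fin.val_eq_val_add_one_mod_iff {τ : ℕ} [NeZero τ] (j k : Fin τ) :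
    (j : ℕ) = ((k : ℕ) + 1) % τ ↔ j - k = 1 := by
  rw [sub_eq_iff_eq_add, Fin.ext_iff, Fin.val_add, Fin.val_one', Nat.mod_add_mod, add_comm 1]

namespace Matrix

theorem charpoly_eq_prod_of_mul_eq_mul_diagonal {n K : Type*} [Fintype n] [DecidableEq n]
    [CommRing K] {A V : Matrix n n K} {d : n → K} (hV : IsUnit V.det)
    (h : A * V = V * diagonal d) : A.charpoly = ∏ i, (X - C (d i)) := by
  obtain ⟨u, rfl⟩ := (isUnit_iff_isUnit_det V).mpr hV
  have hA : A = u.val * diagonal d * u.val⁻¹ := by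
    rw [← h, Matrix.mul_assoc, mul_nonsing_inv _ hV, Matrix.mul_one]
  rw [hA, charpoly_units_conj, charpoly_diagonal]

section Circulant

variable {R : Type*} {τ : ℕ}

theorem circulant_mul_vandermonde [CommRing R] [NeZero τ] {ζ : R} (hζ : ζ ^ τ = 1)
    (v : Fin τ → R) :
    circulant v * vandermonde (fun r : Fin τ => ζ ^ (r : ℕ)) =
      vandermonde (fun r : Fin τ => ζ ^ (r : ℕ)) *
        diagonal fun k : Fin τ => ∑ i, v i * (ζ ^ ((-i : Fin τ) : ℕ)) ^ (k : ℕ) := by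
  ext j k
  rw [mul_diagonal, mul_apply, vandermonde_apply, Finset.mul_sum,
    ← (Equiv.subLeft j).sum_comp]
  refine Finset.sum_congr rfl fun i _ => ?_
  rw [Equiv.subLeft_apply, circulant_apply, sub_sub_cancel, vandermonde_apply, sub_eq_add_neg,
    pow_val_add_of_pow_eq_one hζ, mul_pow]
  ring

/-- The circulant matrix `α • 1 + β • (P + P⁻¹)`, with `P` the cyclic shift of `Fin τ`. -/
def periodicTridiagonal (τ : ℕ) [NeZero τ] [AddMonoid R] (α β : R) : Matrix (Fin τ) (Fin τ) R :=
  circulant fun i => (if i = 0 then α else 0) + (if i = 1 then β else 0) + if i = -1 then β else 0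

variable [NeZero τ]

theorem map_periodicTridiagonal [AddMonoid R] {S F : Type*} [AddMonoid S] [FunLike F R S]
    [AddMonoidHomClass F R S] (f : F) (α β : R) :
    (periodicTridiagonal τ α β).map f = periodicTridiagonal τ (f α) (f β) := by
  simp only [periodicTridiagonal, map_circulant, map_add, apply_ite f, map_zero]

theorem isSymm_periodicTridiagonal [AddCommMonoid R] (α β : R) :
    (periodicTridiagonal τ α β).IsSymm := by
  rw [periodicTridiagonal, Fin.circulant_isSymm_iff]
  intro i
  simp only [neg_eq_iff_eq_neg, neg_zero, neg_neg]
  exact add_right_comm _ _ _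

theorem periodicTridiagonal_apply [AddMonoid R] (α β : R) (j k : Fin τ) :
    periodicTridiagonal τ α β j k = (if j = k then α else 0) +
      (if (j : ℕ) = ((k : ℕ) + 1) % τ then β else 0) +
        if (k : ℕ) = ((j : ℕ) + 1) % τ then β else 0 := by
  have hback : j - k = -1 ↔ (k : ℕ) = ((j : ℕ) + 1) % τ := by
    rw [Fin.val_eq_val_add_one_mod_iff, ← neg_sub, neg_eq_iff_eq_neg, neg_neg]
  simp only [periodicTridiagonal, circulant_apply, sub_eq_zero, hback,
    ← Fin.val_eq_val_add_one_mod_iff]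

theorem periodicTridiagonal_mul_vandermonde [Field R] {ζ : R} (hζ : ζ ^ τ = 1) (α β : R) :
    periodicTridiagonal τ α β * vandermonde (fun r : Fin τ => ζ ^ (r : ℕ)) =
      vandermonde (fun r : Fin τ => ζ ^ (r : ℕ)) *
        diagonal fun k : Fin τ => α + β * (ζ ^ (k : ℕ) + (ζ ^ (k : ℕ))⁻¹) := by
  rw [periodicTridiagonal, circulant_mul_vandermonde hζ]
  congr 2
  ext k
  simp only [add_mul, ite_mul, zero_mul, Finset.sum_add_distrib, Finset.sum_ite_eq',
    Finset.mem_univ, if_true, Fin.val_zero, pow_zero, one_pow, inv_inv,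
    pow_val_neg_of_pow_eq_one hζ, pow_val_one_of_pow_eq_one hζ, inv_pow]
  ring

theorem charpoly_periodicTridiagonal (α β : ℝ) :
    (periodicTridiagonal τ α β).charpoly =
      ∏ k : Fin τ, (X - C (α + 2 * β * cos (2 * π * k / τ))) := by
  set ζ := Complex.exp (2 * π * Complex.I / τ)
  have hζ : IsPrimitiveRoot ζ τ := Complex.isPrimitiveRoot_exp τ (NeZero.ne τ)
  have hV : IsUnit (vandermonde fun r : Fin τ => ζ ^ (r : ℕ)).det :=
    isUnit_iff_ne_zero.mpr <| det_vandermonde_ne_zero_iff.mpr fun a b h =>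
      Fin.ext (hζ.pow_inj a.2 b.2 h)
  have hcos (k : Fin τ) : (α : ℂ) + β * (ζ ^ (k : ℕ) + (ζ ^ (k : ℕ))⁻¹) =
      ((α + 2 * β * cos (2 * π * k / τ) : ℝ) : ℂ) := by
    have hx : (k : ℂ) * (2 * π * Complex.I / τ) = ((2 * π * k / τ : ℝ) : ℂ) * Complex.I := by
      push_cast
      ring
    rw [← Complex.exp_nat_mul, ← Complex.exp_neg, hx, ← neg_mul, ← Complex.two_cos]
    push_cast
    ring
  have h := charpoly_eq_prod_of_mul_eq_mul_diagonal hV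
    (periodicTridiagonal_mul_vandermonde hζ.pow_eq_one (α : ℂ) β)
  have hmap : (periodicTridiagonal τ α β).map Complex.ofRealHom = periodicTridiagonal τ (α : ℂ) β :=
    map_periodicTridiagonal Complex.ofRealHom α β
  rw [← hmap, charpoly_map] at h
  simp_rw [hcos] at h
  apply Polynomial.map_injective Complex.ofRealHom Complex.ofReal_injective
  rw [h, Polynomial.map_prod]
  simp

end Circulant

theorem IsHermitian.map_eigenvalues_eq_of_charpoly_eq {n : Type*} [Fintype n] [DecidableEq n]
    {A : Matrix n n ℝ} (hA : A.IsHermitian) {μ : n → ℝ} (h : A.charpoly = ∏ i, (X - C (μ i))) :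
    Finset.univ.val.map hA.eigenvalues = Finset.univ.val.map μ := by
  have hprod : ∏ i, (X - C (μ i)) = ((Finset.univ.val.map μ).map fun a => X - C a).prod := by
    rw [Multiset.map_map]
    rfl
  have hroots := hA.roots_charpoly_eq_eigenvalues
  rw [h, hprod, roots_multiset_prod_X_sub_C] at hroots
  simpa using hroots.symm

theorem IsHermitian.integral_exp_neg_dotProduct_mulVec_mul_sum_sq_div_of_charpoly_eq
    {n : Type*} [Fintype n] [DecidableEq n] {A : Matrix n n ℝ} (hA : A.IsHermitian) {μ : n → ℝ}
    (hμ : ∀ i, 0 < μ i) (h : A.charpoly = ∏ i, (X - C (μ i))) :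
    (∫ x : n → ℝ, Real.exp (-(x ⬝ᵥ A *ᵥ x)) * ∑ i, x i ^ 2) /
        ∫ x : n → ℝ, Real.exp (-(x ⬝ᵥ A *ᵥ x)) = ∑ i, (2 * μ i)⁻¹ := by
  have hspec := hA.map_eigenvalues_eq_of_charpoly_eq h
  have hpos (i : n) : 0 < hA.eigenvalues i := by
    obtain ⟨k, -, hk⟩ :=
      Multiset.mem_map.mp (hspec ▸ Multiset.mem_map_of_mem _ (Finset.mem_univ_val i))
    exact hk ▸ hμ k
  have hsum := congrArg (fun s => (s.map fun x => (2 * x)⁻¹).sum) hspec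
  simp only [Multiset.map_map, Function.comp_def] at hsum
  exact (hA.integral_exp_neg_dotProduct_mulVec_mul_sum_sq_div hpos).trans hsum

end Matrix

/-- For the Euclidean lattice harmonic oscillator with circulant matrix `Σ`,
the expectation `⟨Φ²⟩_E` equals `(1/(2τ)) Σ_k λ_k²` where
`λ_k² = (amω²/(2hb) + (m/(ahb))(1 − cos(2πk/τ)))⁻¹`. -/
theorem euclidean_lattice_harmonic_oscillator_phi_sq (τ : ℕ) (hτ : 1 ≤ τ)
    (m a ω hb : ℝ) (hm : 0 < m) (ha : 0 < a) (hω : 0 < ω) (hhb : 0 < hb)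
    (Sig : Matrix (Fin τ) (Fin τ) ℝ)
    (hSig : ∀ j k : Fin τ, Sig j k = (1 / hb) *
      ((if j = k then m / a + a * m * ω ^ 2 / 2 else 0)
        - (m / (2 * a)) * ((if (j : ℕ) = ((k : ℕ) + 1) % τ then 1 else 0)
            + (if (k : ℕ) = ((j : ℕ) + 1) % τ then 1 else 0)))) :
    (∫ Φ : Fin τ → ℝ,
        Real.exp (-(dotProduct Φ (Sig.mulVec Φ))) * ((1 / τ) * ∑ k, Φ k ^ 2)) /
      (∫ Φ : Fin τ → ℝ, Real.exp (-(dotProduct Φ (Sig.mulVec Φ)))) =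
    (1 / (2 * τ)) * ∑ k : Fin τ,
      (a * m * ω ^ 2 / (2 * hb) + (m / (a * hb)) * (1 - Real.cos (2 * Real.pi * k / τ)))⁻¹ := by
  have : NeZero τ := NeZero.of_pos hτ
  set μ : Fin τ → ℝ := fun k => a * m * ω ^ 2 / (2 * hb) + m / (a * hb) * (1 - cos (2 * π * k / τ))
  have hSig_eq :
      Sig = periodicTridiagonal τ ((m / a + a * m * ω ^ 2 / 2) / hb) (-(m / (2 * a)) / hb) := by
    ext j k
    rw [hSig, periodicTridiagonal_apply]
    split_ifs <;> ring
  have hA : Sig.IsHermitian :=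
    isHermitian_iff_isSymm.mpr (hSig_eq ▸ isSymm_periodicTridiagonal _ _)
  have hchar : Sig.charpoly = ∏ k, (X - C (μ k)) := by
    rw [hSig_eq, charpoly_periodicTridiagonal]
    congr! 3 with k
    simp only [μ]
    field_simp
    ring
  have hμ_pos (k : Fin τ) : 0 < μ k :=
    add_pos_of_pos_of_nonneg (by positivity)
      (mul_nonneg (by positivity) (sub_nonneg.mpr (cos_le_one _)))
  simp_rw [mul_left_comm _ (1 / (τ : ℝ))]
  rw [integral_const_mul, mul_div_assoc,
    hA.integral_exp_neg_dotProduct_mulVec_mul_sum_sq_div_of_charpoly_eq hμ_pos hchar,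
    Finset.mul_sum, Finset.mul_sum]
  refine Finset.sum_congr rfl fun k _ => ?_
  simp only [μ]
  field_simp
end

section
/- Let (f_n) be a sequence of holomorphic functions on an open connected set D ⊆ ℂ that is locally uniformly bounded, and suppose f_n converges pointwise on a subset of D that has a limit point in D (e.g., an open half-plane contained in D). Then (f_n) converges locally uniformly on all of D to a holomorphic function. -/
/-!
Near a point `c` at which the convergence set accumulates, pick distinct nodes `t i` of that set in
a small disc `closedBall c ρ` and expand each `f n` in its Newton series at these nodes. The Newton
coefficients are divided differences at the nodes, so they converge because every `f n (t i)`
does. By the maximum modulus principle on a larger disc `closedBall c R`, the `k`-th divided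
difference is at most `M (2 / (R - ρ)) ^ k`, so on `closedBall c ρ` the Newton remainder is
`O(q ^ k)` with `q = 4ρ / (R - ρ) < 1`, uniformly in `n`. Hence `f n` is uniformly Cauchy near `c`.
The set `U` of points near which `f n` is uniformly Cauchy is open and meets `D`; a point of
`D ∩ closure U` outside `U` would be an accumulation point of `U`, on which `f n` converges
pointwise, so it lies in `U` after all. By connectedness `D ⊆ U`, and the locally uniform limit of
holomorphic functions is holomorphic.
-/

open Filter Metric Set Topology

section UniformCauchy

theorem uniformCauchySeqOn_of_dist_le {ι α β : Type*} [PseudoMetricSpace β] {F : ι → α → β}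
    {L : Filter ι} {K : Set α} (A : ℕ → ι × ι → ℝ) (e : ℕ → ℝ)
    (hA : ∀ k, Tendsto (A k) (L ×ˢ L) (𝓝 0)) (he : Tendsto e atTop (𝓝 0))
    (h : ∀ k p, ∀ z ∈ K, dist (F p.1 z) (F p.2 z) ≤ A k p + e k) :
    UniformCauchySeqOn F L K := by
  intro u hu
  obtain ⟨ε, hε, hεu⟩ := mem_uniformity_dist.1 hu
  obtain ⟨k, hk⟩ := (he.eventually (gt_mem_nhds (half_pos hε))).exists
  filter_upwards [(hA k).eventually (gt_mem_nhds (half_pos hε))] with p hp z hz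
  exact hεu (by linarith [h k p z hz])

variable {ι α β : Type*} [UniformSpace β] {F : ι → α → β} {p : Filter ι}

theorem isOpen_setOf_exists_mem_nhds [TopologicalSpace α] (P : Set α → Prop) :
    IsOpen {x | ∃ s ∈ 𝓝 x, P s} :=
  isOpen_iff_mem_nhds.2 fun _ ⟨s, hs, hP⟩ => by
    filter_upwards [eventually_mem_nhds_iff.2 hs] with y hy using ⟨s, hy, hP⟩

theorem UniformCauchySeqOn.exists_tendsto [CompleteSpace β] [p.NeBot] {s : Set α} {x : α}
    (hF : UniformCauchySeqOn F p s) (hx : x ∈ s) : ∃ l, Tendsto (fun i => F i x) p (𝓝 l) :=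
  CompleteSpace.complete (hF.cauchy_map hx)

theorem tendstoLocallyUniformlyOn_limUnder [TopologicalSpace α] [CompleteSpace β] [Nonempty β]
    [p.NeBot] {s : Set α}
    (h : ∀ x ∈ s, ∃ u ∈ 𝓝 x, UniformCauchySeqOn F p u) :
    TendstoLocallyUniformlyOn F (fun x => limUnder p fun i => F i x) p s :=
  tendstoLocallyUniformlyOn_of_forall_exists_nhds fun x hx =>
    let ⟨u, hu, hF⟩ := h x hx
    ⟨u, mem_nhdsWithin_of_mem_nhds hu,
      hF.tendstoUniformlyOn_of_tendsto fun _ hy => tendsto_nhds_limUnder (hF.exists_tendsto hy)⟩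

end UniformCauchy

section DividedDifference

variable {𝕜 E : Type*} [NontriviallyNormedField 𝕜] [NormedAddCommGroup E] [NormedSpace 𝕜 E]

/-- The divided difference `g[t 0, …, t (k - 1), z]`, as a function of `z`. -/
noncomputable def divDiff (t : ℕ → 𝕜) (g : 𝕜 → E) : ℕ → 𝕜 → E
  | 0 => g
  | k + 1 => dslope (divDiff t g k) (t k)

theorem eq_sum_divDiff_add (t : ℕ → 𝕜) (g : 𝕜 → E) (k : ℕ) (z : 𝕜) :
    g z = ∑ j ∈ Finset.range k, (∏ i ∈ Finset.range j, (z - t i)) • divDiff t g j (t j)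
      + (∏ i ∈ Finset.range k, (z - t i)) • divDiff t g k z := by
  induction k with
  | zero => simp [divDiff]
  | succ k ih =>
    rw [Finset.sum_range_succ, Finset.prod_range_succ, mul_smul, divDiff, sub_smul_dslope,
      smul_sub, add_assoc, add_sub_cancel]
    exact ih

theorem exists_tendsto_divDiff_apply {ι : Type*} {L : Filter ι} {f : ι → 𝕜 → E} {t : ℕ → 𝕜}
    (ht : Function.Injective t) (hf : ∀ i, ∃ l, Tendsto (fun n => f n (t i)) L (𝓝 l))
    (k : ℕ) {i : ℕ} (hki : k ≤ i) :
    ∃ l, Tendsto (fun n => divDiff t (f n) k (t i)) L (𝓝 l) := by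
  induction k generalizing i with
  | zero => exact hf i
  | succ k ih =>
    obtain ⟨a, ha⟩ := ih (i := i) (by omega)
    obtain ⟨b, hb⟩ := ih le_rfl
    have hne : t i ≠ t k := ht.ne (by omega)
    refine ⟨(t i - t k)⁻¹ • (a - b), ?_⟩
    simp only [divDiff, dslope_of_ne _ hne, slope_def_module]
    exact (ha.sub hb).const_smul _

theorem norm_sub_le_sum_divDiff (g h : 𝕜 → E) {t : ℕ → 𝕜} {c z : 𝕜} {ρ : ℝ}
    (ht : ∀ i, t i ∈ closedBall c ρ) (hz : z ∈ closedBall c ρ) (k : ℕ) :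
    ‖g z - h z‖ ≤ ∑ j ∈ Finset.range k, ‖divDiff t g j (t j) - divDiff t h j (t j)‖ * (2 * ρ) ^ j
      + (‖divDiff t g k z‖ + ‖divDiff t h k z‖) * (2 * ρ) ^ k := by
  set P : ℕ → 𝕜 := fun j => ∏ i ∈ Finset.range j, (z - t i)
  have hP : ∀ j, ‖P j‖ ≤ (2 * ρ) ^ j := fun j => calc
    ‖P j‖ = ∏ i ∈ Finset.range j, ‖z - t i‖ := norm_prod _ _
    _ ≤ ∏ _i ∈ Finset.range j, 2 * ρ :=
      Finset.prod_le_prod (fun i _ => norm_nonneg _) fun i _ => by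
        rw [← dist_eq_norm]
        linarith [dist_triangle_right z (t i) c, mem_closedBall.1 hz, mem_closedBall.1 (ht i)]
    _ = (2 * ρ) ^ j := by rw [Finset.prod_const, Finset.card_range]
  have hexp : g z - h z = ∑ j ∈ Finset.range k, P j • (divDiff t g j (t j) - divDiff t h j (t j))
      + P k • (divDiff t g k z - divDiff t h k z) := by
    rw [eq_sum_divDiff_add t g k z, eq_sum_divDiff_add t h k z]
    simp only [P, smul_sub, Finset.sum_sub_distrib]
    abel
  rw [hexp]
  refine (norm_add_le _ _).trans (add_le_add ((norm_sum_le _ _).trans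
    (Finset.sum_le_sum fun j _ => ?_)) ?_) <;> rw [norm_smul, mul_comm]
  · exact mul_le_mul_of_nonneg_left (hP j) (norm_nonneg _)
  · exact mul_le_mul (norm_sub_le _ _) (hP k) (norm_nonneg _)
      (add_nonneg (norm_nonneg _) (norm_nonneg _))

end DividedDifference

section Holomorphic

variable {F : Type*} [NormedAddCommGroup F] [NormedSpace ℂ F] [CompleteSpace F]

theorem differentiableOn_divDiff {g : ℂ → F} {s : Set ℂ} {t : ℕ → ℂ}
    (hg : DifferentiableOn ℂ g s) (ht : ∀ i, s ∈ 𝓝 (t i)) (k : ℕ) :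
    DifferentiableOn ℂ (divDiff t g k) s := by
  induction k with
  | zero => exact hg
  | succ k ih => exact (Complex.differentiableOn_dslope (ht k)).2 ih

theorem norm_dslope_le {h : ℂ → F} {a c z : ℂ} {ρ R B : ℝ}
    (hh : DifferentiableOn ℂ h (closedBall c R)) (ha : a ∈ closedBall c ρ) (hρR : ρ < R)
    (hB : ∀ w ∈ closedBall c R, ‖h w‖ ≤ B) (hz : z ∈ closedBall c R) :
    ‖dslope h a z‖ ≤ 2 * B / (R - ρ) := by
  have ha' : dist a c ≤ ρ := mem_closedBall.1 ha
  have hR : R ≠ 0 := by linarith [dist_nonneg (x := a) (y := c)]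
  have hd : DiffContOnCl ℂ (dslope h a) (ball c R) := by
    refine DifferentiableOn.diffContOnCl ?_
    rw [closure_ball c hR]
    exact (Complex.differentiableOn_dslope (closedBall_mem_nhds_of_mem
      (mem_ball.2 (by linarith)))).2 hh
  refine Complex.norm_le_of_forall_mem_frontier_norm_le isBounded_ball hd (fun w hw => ?_)
    (by rwa [closure_ball c hR])
  rw [frontier_ball c hR] at hw
  have hwa : R - ρ ≤ ‖w - a‖ := by
    rw [← dist_eq_norm]
    linarith [dist_triangle w a c, mem_sphere.1 hw]
  have hne : w ≠ a := by
    rintro rfl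
    linarith [mem_sphere.1 hw]
  rw [dslope_of_ne _ hne, slope_def_module, norm_smul, norm_inv]
  calc ‖w - a‖⁻¹ * ‖h w - h a‖ ≤ (R - ρ)⁻¹ * (B + B) :=
        mul_le_mul (inv_anti₀ (by linarith) hwa)
          (norm_sub_le_of_le (hB w (sphere_subset_closedBall hw))
            (hB a (closedBall_subset_closedBall hρR.le ha)))
          (norm_nonneg _) (inv_nonneg.2 (by linarith))
    _ = 2 * B / (R - ρ) := by ring

theorem norm_divDiff_le {g : ℂ → F} {t : ℕ → ℂ} {c : ℂ} {ρ R B : ℝ}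
    (hg : DifferentiableOn ℂ g (closedBall c R)) (ht : ∀ i, t i ∈ closedBall c ρ) (hρR : ρ < R)
    (hB : ∀ z ∈ closedBall c R, ‖g z‖ ≤ B) (k : ℕ) :
    ∀ z ∈ closedBall c R, ‖divDiff t g k z‖ ≤ B * (2 / (R - ρ)) ^ k := by
  induction k with
  | zero => simpa [divDiff] using hB
  | succ k ih =>
    intro z hz
    have hd := differentiableOn_divDiff hg (fun i => closedBall_mem_nhds_of_mem
      (mem_ball.2 ((mem_closedBall.1 (ht i)).trans_lt hρR))) k
    calc ‖divDiff t g (k + 1) z‖ ≤ 2 * (B * (2 / (R - ρ)) ^ k) / (R - ρ) :=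
          norm_dslope_le hd (ht k) hρR ih hz
      _ = B * (2 / (R - ρ)) ^ (k + 1) := by rw [pow_succ]; ring

theorem uniformCauchySeqOn_closedBall_of_injective {ι : Type*} {L : Filter ι} {f : ι → ℂ → F}
    {t : ℕ → ℂ} {c : ℂ} {ρ R M : ℝ} (hf : ∀ n, DifferentiableOn ℂ (f n) (closedBall c R))
    (hM : ∀ n, ∀ z ∈ closedBall c R, ‖f n z‖ ≤ M) (ht : Function.Injective t)
    (htc : ∀ i, t i ∈ closedBall c ρ) (hρR : 5 * ρ < R)
    (hconv : ∀ i, ∃ l, Tendsto (fun n => f n (t i)) L (𝓝 l)) :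
    UniformCauchySeqOn f L (closedBall c ρ) := by
  have hρ : 0 ≤ ρ := dist_nonneg.trans (htc 0)
  have hq : 4 * ρ / (R - ρ) < 1 := (div_lt_one (by linarith)).2 (by linarith)
  choose a ha using fun j => exists_tendsto_divDiff_apply ht hconv j le_rfl
  refine uniformCauchySeqOn_of_dist_le
    (fun k p => ∑ j ∈ Finset.range k,
      ‖divDiff t (f p.1) j (t j) - divDiff t (f p.2) j (t j)‖ * (2 * ρ) ^ j)
    (fun k => 2 * M * (4 * ρ / (R - ρ)) ^ k) (fun k => ?_) ?_ (fun k p z hz => ?_)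
  · simpa using tendsto_finsetSum (Finset.range k) fun j _ =>
      (((ha j).comp tendsto_fst).sub ((ha j).comp tendsto_snd)).norm.mul_const ((2 * ρ) ^ j)
  · simpa using (tendsto_pow_atTop_nhds_zero_of_lt_one
    (div_nonneg (by linarith) (by linarith)) hq).const_mul (2 * M)
  · have hzR : z ∈ closedBall c R := closedBall_subset_closedBall (by linarith) hz
    set x := 2 / (R - ρ) with hx
    have hD n : ‖divDiff t (f n) k z‖ ≤ M * x ^ k :=
      norm_divDiff_le (hf n) htc (by linarith) (hM n) k z hzR
    clear_value x
    rw [dist_eq_norm]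
    refine (norm_sub_le_sum_divDiff _ _ htc hz k).trans (add_le_add le_rfl ?_)
    calc (‖divDiff t (f p.1) k z‖ + ‖divDiff t (f p.2) k z‖) * (2 * ρ) ^ k
        ≤ (M * x ^ k + M * x ^ k) * (2 * ρ) ^ k := by gcongr <;> apply hD
      _ = 2 * M * (x * (2 * ρ)) ^ k := by rw [mul_pow]; ring
      _ = 2 * M * (4 * ρ / (R - ρ)) ^ k := by congr 2; rw [hx]; ring

theorem exists_mem_nhds_uniformCauchySeqOn_of_accPt {ι : Type*} {L : Filter ι}
    {f : ι → ℂ → F} {c : ℂ} {r M : ℝ} {S : Set ℂ} (hr : 0 < r)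
    (hf : ∀ n, DifferentiableOn ℂ (f n) (ball c r)) (hM : ∀ n, ∀ z ∈ ball c r, ‖f n z‖ ≤ M)
    (hS : ∀ z ∈ S, ∃ l, Tendsto (fun n => f n z) L (𝓝 l)) (hacc : AccPt c (𝓟 S)) :
    ∃ s ∈ 𝓝 c, UniformCauchySeqOn f L s := by
  have hsub : closedBall c (r / 2) ⊆ ball c r := closedBall_subset_ball (by linarith)
  have hnodes := Set.Infinite.of_accPt
    (hacc.nhds_inter (closedBall_mem_nhds c (show 0 < r / 16 by positivity)))
  let t := hnodes.natEmbedding _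
  exact ⟨_, closedBall_mem_nhds c (by positivity), uniformCauchySeqOn_closedBall_of_injective
    (fun n => (hf n).mono hsub) (fun n z hz => hM n z (hsub hz))
    (Subtype.val_injective.comp t.injective) (fun i => (t i).2.1) (by linarith)
    (fun i => hS _ (t i).2.2)⟩

end Holomorphic

theorem vitali_convergence_general (D : Set ℂ) (hD : IsOpen D) (hDconn : IsConnected D)
    (f : ℕ → ℂ → ℂ) (hf : ∀ n, DifferentiableOn ℂ (f n) D)
    (hbd : ∀ z ∈ D, ∃ r > (0 : ℝ), Metric.ball z r ⊆ D ∧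
      ∃ M : ℝ, ∀ n, ∀ w ∈ Metric.ball z r, ‖f n w‖ ≤ M)
    (T : Set ℂ)
    (hacc : ∃ z₀ ∈ D, AccPt z₀ (Filter.principal T))
    (hconv : ∀ z ∈ T, ∃ l : ℂ, Tendsto (fun n => f n z) atTop (nhds l)) :
    ∃ F : ℂ → ℂ, DifferentiableOn ℂ F D ∧
      TendstoLocallyUniformlyOn f F atTop D := by
  obtain ⟨z₀, hz₀, hz₀T⟩ := hacc
  set U := {c | ∃ s ∈ 𝓝 c, UniformCauchySeqOn f atTop s}
  have mem_U_of_accPt : ∀ c ∈ D, ∀ S : Set ℂ, (∀ z ∈ S, ∃ l, Tendsto (fun n => f n z) atTop (𝓝 l)) →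
      AccPt c (𝓟 S) → c ∈ U := fun c hc S hS hcS => by
    obtain ⟨r, hr, hrD, M, hM⟩ := hbd c hc
    exact exists_mem_nhds_uniformCauchySeqOn_of_accPt hr (fun n => (hf n).mono hrD) hM hS hcS
  have hDU : D ⊆ U := by
    refine hDconn.isPreconnected.subset_of_closure_inter_subset
      (isOpen_setOf_exists_mem_nhds _) ⟨z₀, hz₀, mem_U_of_accPt z₀ hz₀ T hconv hz₀T⟩ ?_
    rintro c ⟨hcU, hcD⟩
    by_contra hc
    refine hc (mem_U_of_accPt c hcD U
      (fun z ⟨s, hs, hfs⟩ => hfs.exists_tendsto (mem_of_mem_nhds hs)) ?_)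
    rwa [accPt_principal_iff_nhdsWithin, sdiff_singleton_eq_self hc,
      ← mem_closure_iff_nhdsWithin_neBot]
  have hF := tendstoLocallyUniformlyOn_limUnder fun z hz => hDU hz
  exact ⟨_, hF.differentiableOn (Eventually.of_forall hf) hD, hF⟩

/-- Vitali's convergence theorem: a locally uniformly bounded sequence of holomorphic
functions on an open connected `D ⊆ ℂ` that converges pointwise on a subset of `D`
having a limit point in `D` converges locally uniformly on `D` to a holomorphic
function. -/
theorem vitali_convergence (D : Set ℂ) (hD : IsOpen D) (hDconn : IsConnected D)
    (f : ℕ → ℂ → ℂ) (hf : ∀ n, DifferentiableOn ℂ (f n) D)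
    (hbd : ∀ z ∈ D, ∃ r > (0 : ℝ), Metric.ball z r ⊆ D ∧
      ∃ M : ℝ, ∀ n, ∀ w ∈ Metric.ball z r, ‖f n w‖ ≤ M)
    (T : Set ℂ) (hTD : T ⊆ D)
    (hacc : ∃ z₀ ∈ D, AccPt z₀ (Filter.principal T))
    (hconv : ∀ z ∈ T, ∃ l : ℂ, Tendsto (fun n => f n z) atTop (nhds l)) :
    ∃ F : ℂ → ℂ, DifferentiableOn ℂ F D ∧
      TendstoLocallyUniformlyOn f F atTop D :=
  vitali_convergence_general D hD hDconn f hf hbd T hacc hconv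
end

section
/- Let σ > 0, c ∈ ℝ with c ≠ 0, and δ > −1. Then for the regularized oscillatory integral, ∫_0^∞ e^{icr^σ} r^δ dr = (1/σ)·Γ((δ+1)/σ)/(−ic)^{(δ+1)/σ}, where the integral is defined as the limit ε → 0⁺ of ∫_0^∞ e^{(ic−ε)r^σ} r^δ dr and the power (−ic)^{(δ+1)/σ} uses the principal branch. -/
open MeasureTheory Filter Complex
open scoped Topology

/-! The substitution `s = r^σ` turns `∫₀^∞ e^{-b r^σ} r^δ dr` into `σ⁻¹ ∫₀^∞ s^{a-1} e^{-bs} ds`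
with `a = (δ+1)/σ`. For real `b > 0` this Laplace integral is `Γ(a) / b^a`; both sides are
holomorphic in `b` on `Re b > 0` (differentiation under the integral sign), so the identity theorem
extends the formula to the whole half-plane. At `b = ε - ic` the closed form is continuous as
`ε → 0⁺`, because `c ≠ 0` keeps `-ic` off the branch cut of the principal power. -/

noncomputable def laplaceCpow (a b : ℂ) : ℂ :=
  ∫ t in Set.Ioi (0 : ℝ), (t : ℂ) ^ (a - 1) * cexp (-(b * t))

section laplaceCpow

variable {a b : ℂ}

lemma aestronglyMeasurable_cpow_mul_cexp_neg_mul (a b : ℂ) :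
    AEStronglyMeasurable (fun t : ℝ => (t : ℂ) ^ (a - 1) * cexp (-(b * t)))
      (volume.restrict (Set.Ioi 0)) := by
  refine (ContinuousOn.mul (fun t ht => ?_) (by fun_prop)).aestronglyMeasurable measurableSet_Ioi
  exact (continuousAt_ofReal_cpow_const t _ (Or.inr (ne_of_gt ht))).continuousWithinAt

lemma norm_cpow_mul_cexp_neg_mul {t : ℝ} (ht : 0 < t) :
    ‖(t : ℂ) ^ (a - 1) * cexp (-(b * t))‖ = t ^ (a.re - 1) * Real.exp (-(b.re * t)) := by
  rw [norm_mul, norm_cpow_eq_rpow_re_of_pos ht, norm_exp]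
  simp [mul_re]

lemma integrableOn_rpow_mul_exp_neg_mul {s β : ℝ} (hs : -1 < s) (hβ : 0 < β) :
    IntegrableOn (fun t : ℝ => t ^ s * Real.exp (-(β * t))) (Set.Ioi 0) := by
  simpa [Real.rpow_one] using integrableOn_rpow_mul_exp_neg_mul_rpow hs one_pos hβ

lemma integrableOn_cpow_mul_cexp_neg_mul (ha : 0 < a.re) (hb : 0 < b.re) :
    IntegrableOn (fun t : ℝ => (t : ℂ) ^ (a - 1) * cexp (-(b * t))) (Set.Ioi 0) := by
  refine (integrableOn_rpow_mul_exp_neg_mul (s := a.re - 1) (by linarith) hb).mono'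
    (aestronglyMeasurable_cpow_mul_cexp_neg_mul a b) ?_
  filter_upwards [ae_restrict_mem measurableSet_Ioi] with t ht
  rw [norm_cpow_mul_cexp_neg_mul ht]

lemma norm_mul_cpow_mul_cexp_neg_mul_le {β t : ℝ} (ht : 0 < t) (hβ : β ≤ b.re) :
    ‖-(t : ℂ) * ((t : ℂ) ^ (a - 1) * cexp (-(b * t)))‖ ≤ t ^ a.re * Real.exp (-(β * t)) := by
  have hpow : t * t ^ (a.re - 1) = t ^ a.re := by
    rw [mul_comm, ← Real.rpow_add_one ht.ne', sub_add_cancel]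
  rw [norm_mul, norm_neg, norm_real, Real.norm_of_nonneg ht.le, norm_cpow_mul_cexp_neg_mul ht,
    ← mul_assoc, hpow]
  gcongr

lemma differentiableOn_laplaceCpow (ha : 0 < a.re) :
    DifferentiableOn ℂ (laplaceCpow a) {z | 0 < z.re} := by
  intro b (hb : 0 < b.re)
  refine DifferentiableAt.differentiableWithinAt ?_
  have hβ : 0 < b.re / 2 := by linarith
  refine (hasDerivAt_integral_of_dominated_loc_of_deriv_le
    (F' := fun z t => -(t : ℂ) * ((t : ℂ) ^ (a - 1) * cexp (-(z * t))))
    (Metric.ball_mem_nhds b hβ)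
    (Eventually.of_forall fun z => aestronglyMeasurable_cpow_mul_cexp_neg_mul a z)
    (integrableOn_cpow_mul_cexp_neg_mul ha hb)
    ((continuous_ofReal.neg.aestronglyMeasurable).mul
      (aestronglyMeasurable_cpow_mul_cexp_neg_mul a b))
    ?_ (integrableOn_rpow_mul_exp_neg_mul (s := a.re) (by linarith) hβ) ?_).2.differentiableAt
  · filter_upwards [ae_restrict_mem measurableSet_Ioi] with t ht z hz
    refine norm_mul_cpow_mul_cexp_neg_mul_le ht ?_
    have := (abs_re_le_norm (z - b)).trans (mem_ball_iff_norm.mp hz).le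
    rw [sub_re, abs_le] at this
    linarith [this.1]
  · filter_upwards [ae_restrict_mem measurableSet_Ioi] with t ht z hz
    have hlin : HasDerivAt (fun w : ℂ => -(w * t)) (-t) z := (hasDerivAt_mul_const _).neg
    exact (hlin.cexp.const_mul _).congr_deriv (by ring)

lemma laplaceCpow_ofReal (ha : 0 < a.re) {r : ℝ} (hr : 0 < r) :
    laplaceCpow a r = Gamma a / (r : ℂ) ^ a := by
  rw [laplaceCpow, integral_cpow_mul_exp_neg_mul_Ioi ha hr, one_div,
    inv_cpow _ _ (by simp [arg_ofReal_of_nonneg hr.le, Real.pi_ne_zero.symm]), inv_mul_eq_div]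

theorem laplaceCpow_eq_Gamma_div_cpow (ha : 0 < a.re) (hb : 0 < b.re) :
    laplaceCpow a b = Gamma a / b ^ a := by
  have hU : IsOpen {z : ℂ | 0 < z.re} := isOpen_lt continuous_const continuous_re
  have hrhs : DifferentiableOn ℂ (fun z : ℂ => Gamma a / z ^ a) {z | 0 < z.re} :=
    fun z (hz : 0 < z.re) => ((differentiableAt_const _).div
      (differentiableAt_id.cpow_const (Or.inl hz))
      (cpow_ne_zero_iff.mpr (Or.inl (slitPlane_ne_zero (Or.inl hz))))).differentiableWithinAt
  have hfreq : ∃ᶠ z in 𝓝[≠] (1 : ℂ), laplaceCpow a z = Gamma a / z ^ a := by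
    have hofReal : Tendsto ofReal (𝓝[≠] 1) (𝓝[≠] 1) :=
      tendsto_nhdsWithin_of_tendsto_nhds_of_eventually_within _
        ((continuous_ofReal.tendsto' 1 1 ofReal_one).mono_left nhdsWithin_le_nhds)
        (eventually_nhdsWithin_of_forall fun r hr => ofReal_ne_one.mpr hr)
    have hreal : ∀ᶠ r : ℝ in 𝓝[≠] 1, laplaceCpow a r = Gamma a / (r : ℂ) ^ a :=
      ((eventually_gt_nhds (zero_lt_one (α := ℝ))).filter_mono nhdsWithin_le_nhds).mono
        fun r hr => laplaceCpow_ofReal ha hr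
    exact hofReal.frequently hreal.frequently
  exact ((differentiableOn_laplaceCpow ha).analyticOnNhd hU).eqOn_of_preconnected_of_frequently_eq
    (hrhs.analyticOnNhd hU) (convex_halfSpace_re_gt 0).isPreconnected (by simp) hfreq hb

end laplaceCpow

theorem integral_cexp_neg_mul_rpow_mul_rpow_eq_laplaceCpow {σ : ℝ} (hσ : 0 < σ) (δ : ℝ) (b : ℂ) :
    ∫ r in Set.Ioi (0 : ℝ), cexp (-b * (r ^ σ : ℝ)) * ((r ^ δ : ℝ) : ℂ)
      = 1 / σ * laplaceCpow ((δ + 1) / σ : ℝ) b := by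
  set a : ℝ := (δ + 1) / σ
  have hpow : ∀ x : ℝ, 0 < x → x ^ (σ - 1) * (x ^ σ) ^ (a - 1) = x ^ δ := by
    intro x hx
    rw [← Real.rpow_mul hx.le, ← Real.rpow_add hx]
    have hσa : σ * a = δ + 1 := mul_div_cancel₀ _ hσ.ne'
    congr 1
    linear_combination hσa
  rw [laplaceCpow, ← integral_comp_rpow_Ioi_of_pos
    (g := fun y : ℝ => (y : ℂ) ^ ((a : ℂ) - 1) * cexp (-(b * y))) hσ, ← integral_const_mul]
  refine setIntegral_congr_fun measurableSet_Ioi fun x (hx : 0 < x) => ?_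
  have hcast : ((x ^ σ : ℝ) : ℂ) ^ ((a : ℂ) - 1) = (((x ^ σ) ^ (a - 1) : ℝ) : ℂ) := by
    rw [← ofReal_one, ← ofReal_sub, ← ofReal_cpow (by positivity)]
  have hσ' : (σ : ℂ) ≠ 0 := ofReal_ne_zero.mpr hσ.ne'
  rw [real_smul, hcast, ← hpow x hx]
  push_cast
  field_simp

theorem integral_cexp_neg_mul_rpow_mul_rpow {σ δ : ℝ} (hσ : 0 < σ) (hδ : -1 < δ) {b : ℂ}
    (hb : 0 < b.re) :
    ∫ r in Set.Ioi (0 : ℝ), cexp (-b * (r ^ σ : ℝ)) * ((r ^ δ : ℝ) : ℂ)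
      = 1 / σ * Gamma ((δ + 1) / σ : ℝ) / b ^ (((δ + 1) / σ : ℝ) : ℂ) := by
  have ha : 0 < ((((δ + 1) / σ : ℝ)) : ℂ).re := by
    rw [ofReal_re]
    exact div_pos (by linarith) hσ
  rw [integral_cexp_neg_mul_rpow_mul_rpow_eq_laplaceCpow hσ, laplaceCpow_eq_Gamma_div_cpow ha hb,
    mul_div_assoc]

/-- For `σ > 0`, `c ≠ 0`, `δ > −1`, the regularized oscillatory integral
`∫_0^∞ e^{icr^σ} r^δ dr`, defined as the limit `ε → 0⁺` of
`∫_0^∞ e^{(ic−ε)r^σ} r^δ dr`, equals `(1/σ)·Γ((δ+1)/σ)/(−ic)^{(δ+1)/σ}` (principal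
branch). -/
theorem oscillatory_power_integral (σ δ c : ℝ) (hσ : 0 < σ) (hδ : -1 < δ) (hc : c ≠ 0) :
    Tendsto (fun ε : ℝ =>
        ∫ r in Set.Ioi (0 : ℝ),
          Complex.exp ((Complex.I * c - ε) * (r ^ σ : ℝ)) * ((r ^ δ : ℝ) : ℂ))
      (nhdsWithin 0 (Set.Ioi 0))
      (nhds ((1 / (σ : ℂ)) * Complex.Gamma (((δ + 1) / σ : ℝ)) /
        (-Complex.I * c) ^ (((δ + 1) / σ : ℝ) : ℂ))) := by
  set a : ℂ := (((δ + 1) / σ : ℝ) : ℂ)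
  have hslit : -I * c ∈ slitPlane := Or.inr (by simpa using hc)
  have hlimit : Tendsto (fun ε : ℝ => 1 / (σ : ℂ) * Gamma a / ((ε : ℂ) - I * c) ^ a)
      (𝓝[>] 0) (𝓝 (1 / (σ : ℂ) * Gamma a / (-I * c) ^ a)) := by
    have hbase : Tendsto (fun ε : ℝ => (ε : ℂ) - I * c) (𝓝[>] 0) (𝓝 (-I * c)) :=
      ((by fun_prop : Continuous fun ε : ℝ => (ε : ℂ) - I * c).tendsto' 0 _
        (by simp)).mono_left nhdsWithin_le_nhds
    exact tendsto_const_nhds.div ((continuousAt_cpow_const hslit).tendsto.comp hbase)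
      (cpow_ne_zero_iff.mpr (Or.inl (slitPlane_ne_zero hslit)))
  refine hlimit.congr' (eventually_nhdsWithin_of_forall fun ε (hε : 0 < ε) => ?_)
  rw [← integral_cexp_neg_mul_rpow_mul_rpow hσ hδ (by simpa using hε), neg_sub]
end
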